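/- Let N > 0 and a ≠ 0 be real. The multiple Hermite polynomials satisfy, for all integers k₁, k₂ ≥ 1 and all z, the two nearest-neighbor relations P_{k₁+1,k₂−1}(z) = P_{k₁,k₂}(z) − 2a·P_{k₁,k₂−1}(z) and P_{k₁−1,k₂+1}(z) = P_{k₁,k₂}(z) + 2a·P_{k₁−1,k₂}(z). -/

import Mathlib

open MeasureTheory Filter Topology Polynomial Asymptotics

noncomputable section

/-- first weight -/
def w1 (N a x : ℝ) : ℝ := Real.exp (-N * (x ^ 2 / 2 - a * x))

/-- second weight -/
def w2 (N a x : ℝ) : ℝ := Real.exp (-N * (x ^ 2 / 2 + a * x))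

/-- `P` is the multiple Hermite polynomial with indices `k₁, k₂`. -/
def IsMHP (N a : ℝ) (k₁ k₂ : ℕ) (P : Polynomial ℝ) : Prop :=
  P.Monic ∧ P.natDegree = k₁ + k₂ ∧
  (∀ j < k₁, ∫ x : ℝ, P.eval x * x ^ j * w1 N a x = 0) ∧
  (∀ j < k₂, ∫ x : ℝ, P.eval x * x ^ j * w2 N a x = 0)

/-- the normalization constant `h⁽¹⁾` -/
def hc1 (N a : ℝ) (k₁ : ℕ) (P : Polynomial ℝ) : ℝ :=
  ∫ x : ℝ, P.eval x * x ^ k₁ * w1 N a x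

/-- the normalization constant `h⁽²⁾` -/
def hc2 (N a : ℝ) (k₂ : ℕ) (P : Polynomial ℝ) : ℝ :=
  ∫ x : ℝ, P.eval x * x ^ k₂ * w2 N a x

/-!
With `b = N / 2` the weights are, up to constant factors, the Gaussians `e^{-b(x ∓ a)²}`.
The Gaussian transform `(T Q)(t) = ∫ Q(x) e^{-b(x-t)²} dx` maps polynomials to polynomials of
the same degree, so it is injective. Its `j`-th Hasse derivative at `t` is
`∫ Q^{[j]}(x) e^{-b(x-t)²} dx`, and integrating by parts `j` times shows that this vanishes for
`j < k` whenever `Q` is orthogonal to `x^i e^{-b(x-t)²}` for all `i < k`. Hence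
`T P_{k₁,k₂} = c (t - a)^{k₁} (t + a)^{k₂}` with `c` independent of the indices, and both
relations follow, after applying `T`, from `t + a = (t - a) + 2a`.
-/

open Real

lemma Polynomial.hasseDeriv_comm {R : Type*} [Semiring R] (i j : ℕ) (f : R[X]) :
    hasseDeriv i (hasseDeriv j f) = hasseDeriv j (hasseDeriv i f) := by
  have hij := LinearMap.congr_fun (hasseDeriv_comp (R := R) i j) f
  have hji := LinearMap.congr_fun (hasseDeriv_comp (R := R) j i) f
  simp only [LinearMap.comp_apply, LinearMap.smul_apply] at hij hji
  rw [hij, hji, add_comm j i, Nat.choose_symm_add]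

lemma Polynomial.X_sub_C_pow_dvd_iff_hasseDeriv_eval_eq_zero {R : Type*} [CommRing R]
    {p : R[X]} {t : R} {n : ℕ} :
    (X - C t) ^ n ∣ p ↔ ∀ j < n, (hasseDeriv j p).eval t = 0 := by
  simp only [X_sub_C_pow_dvd_iff, ← taylor_apply, X_pow_dvd_iff, taylor_coeff]

section GaussianMoment

variable {b : ℝ}

lemma integrable_pow_mul_exp_neg_mul_sq (hb : 0 < b) (n : ℕ) :
    Integrable fun x : ℝ ↦ x ^ n * exp (-b * x ^ 2) := by
  simpa using
    integrable_rpow_mul_exp_neg_mul_sq hb (s := n) (by linarith [n.cast_nonneg (α := ℝ)])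

lemma integrable_eval_mul_exp_neg_mul_sq (hb : 0 < b) (Q : ℝ[X]) :
    Integrable fun x : ℝ ↦ Q.eval x * exp (-b * x ^ 2) := by
  induction Q using Polynomial.induction_on' with
  | add p q hp hq =>
    simp only [eval_add, add_mul]
    exact hp.add hq
  | monomial n c => simpa [mul_assoc] using (integrable_pow_mul_exp_neg_mul_sq hb n).const_mul c

lemma integrable_eval_mul_exp_neg_mul_sub_sq (hb : 0 < b) (Q : ℝ[X]) (t : ℝ) :
    Integrable fun x : ℝ ↦ Q.eval x * exp (-b * (x - t) ^ 2) := by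
  convert (integrable_eval_mul_exp_neg_mul_sq hb (Q.comp (X + C t))).comp_sub_right t using 3
  simp

def gaussianMoment (hb : 0 < b) (t : ℝ) : ℝ[X] →ₗ[ℝ] ℝ where
  toFun Q := ∫ x, Q.eval x * exp (-b * (x - t) ^ 2)
  map_add' P Q := by
    simp only [eval_add, add_mul]
    exact integral_add (integrable_eval_mul_exp_neg_mul_sub_sq hb P t)
      (integrable_eval_mul_exp_neg_mul_sub_sq hb Q t)
  map_smul' c Q := by
    simp only [eval_smul, smul_eq_mul, mul_assoc, RingHom.id_apply]
    exact integral_const_mul c _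

variable (hb : 0 < b)

lemma gaussianMoment_apply (t : ℝ) (Q : ℝ[X]) :
    gaussianMoment hb t Q = ∫ x, Q.eval x * exp (-b * (x - t) ^ 2) :=
  rfl

lemma gaussianMoment_zero_one_pos : 0 < gaussianMoment hb 0 1 := by
  simp only [gaussianMoment_apply, eval_one, one_mul, sub_zero, integral_gaussian]
  positivity

lemma gaussianMoment_derivative (t : ℝ) (S : ℝ[X]) :
    gaussianMoment hb t (derivative S) = gaussianMoment hb t (C (2 * b) * (X - C t) * S) := by
  have hderiv : ∀ x, HasDerivAt (fun x ↦ S.eval x * exp (-b * (x - t) ^ 2))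
      ((derivative S - C (2 * b) * (X - C t) * S).eval x * exp (-b * (x - t) ^ 2)) x := by
    intro x
    have hexp : HasDerivAt (fun x ↦ -b * (x - t) ^ 2) (-b * (2 * (x - t))) x := by
      simpa using (((hasDerivAt_id x).sub_const t).pow 2).const_mul (-b)
    refine ((S.hasDerivAt x).mul hexp.exp).congr_deriv ?_
    simp only [eval_sub, eval_mul, eval_C, eval_X]
    ring
  rw [← sub_eq_zero, ← map_sub]
  exact integral_eq_zero_of_hasDerivAt_of_integrable hderiv
    (integrable_eval_mul_exp_neg_mul_sub_sq hb _ t) (integrable_eval_mul_exp_neg_mul_sub_sq hb S t)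

variable {hb} {t : ℝ} {Q : ℝ[X]} {k : ℕ}

lemma gaussianMoment_mul_eq_zero_of_natDegree_lt
    (hQ : ∀ j < k, gaussianMoment hb t (Q * X ^ j) = 0) {R : ℝ[X]} (hR : R.natDegree < k) :
    gaussianMoment hb t (Q * R) = 0 := by
  rw [R.as_sum_range_C_mul_X_pow' hR, Finset.mul_sum, map_sum]
  refine Finset.sum_eq_zero fun j hj ↦ ?_
  rw [mul_left_comm, ← smul_eq_C_mul, map_smul, hQ j (Finset.mem_range.1 hj), smul_zero]

lemma gaussianMoment_derivative_mul_eq_zero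
    (hQ : ∀ R : ℝ[X], R.natDegree < k + 1 → gaussianMoment hb t (Q * R) = 0)
    {R : ℝ[X]} (hR : R.natDegree < k) : gaussianMoment hb t (derivative Q * R) = 0 := by
  have hdeg : (C (2 * b) * (X - C t) * R - derivative R).natDegree < k + 1 := by
    refine (natDegree_sub_le _ _).trans_lt (max_lt ?_ ?_)
    · calc (C (2 * b) * (X - C t) * R).natDegree
          ≤ (C (2 * b) * (X - C t)).natDegree + R.natDegree := natDegree_mul_le
        _ ≤ 1 + R.natDegree := by gcongr; exact (natDegree_C_mul_le _ _).trans (by simp)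
        _ < k + 1 := by omega
    · exact (natDegree_derivative_le R).trans_lt (by omega)
  calc gaussianMoment hb t (derivative Q * R)
      = gaussianMoment hb t (derivative (Q * R)) - gaussianMoment hb t (Q * derivative R) := by
        rw [derivative_mul, map_add]
        ring
    _ = gaussianMoment hb t (Q * (C (2 * b) * (X - C t) * R - derivative R)) := by
        rw [gaussianMoment_derivative, ← map_sub]
        ring_nf
    _ = 0 := hQ _ hdeg

lemma gaussianMoment_iterate_derivative_mul_eq_zero (j : ℕ)
    (hQ : ∀ R : ℝ[X], R.natDegree < k + j → gaussianMoment hb t (Q * R) = 0)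
    {R : ℝ[X]} (hR : R.natDegree < k) : gaussianMoment hb t (derivative^[j] Q * R) = 0 := by
  induction j generalizing Q with
  | zero => exact hQ R hR
  | succ j ih =>
    rw [Function.iterate_succ_apply]
    exact ih fun R' hR' ↦ gaussianMoment_derivative_mul_eq_zero hQ hR'

lemma gaussianMoment_hasseDeriv_eq_zero
    (hQ : ∀ i < k, gaussianMoment hb t (Q * X ^ i) = 0) {j : ℕ} (hj : j < k) :
    gaussianMoment hb t (hasseDeriv j Q) = 0 := by
  have h := gaussianMoment_iterate_derivative_mul_eq_zero (k := k - j) j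
    (fun R hR ↦ gaussianMoment_mul_eq_zero_of_natDegree_lt hQ (by omega)) (R := 1)
    (by rw [natDegree_one]; omega)
  rw [mul_one, ← factorial_smul_hasseDeriv, LinearMap.smul_apply, map_nsmul] at h
  exact (smul_eq_zero.1 h).resolve_left (Nat.factorial_ne_zero j)

end GaussianMoment

section GaussTransform

variable {b : ℝ} (hb : 0 < b)

/-- For `Q.natDegree < M` this is the polynomial `t ↦ ∫ Q(x) e^{-b(x-t)²} dx`: integrate the
Taylor expansion of `Q` at `t` term by term. -/
def gaussTransform (M : ℕ) : ℝ[X] →ₗ[ℝ] ℝ[X] :=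
  ∑ j ∈ Finset.range M, gaussianMoment hb 0 (X ^ j) • hasseDeriv j

variable {M : ℕ}

lemma gaussTransform_apply (Q : ℝ[X]) :
    gaussTransform hb M Q =
      ∑ j ∈ Finset.range M, gaussianMoment hb 0 (X ^ j) • hasseDeriv j Q := by
  simp [gaussTransform]

lemma eval_gaussTransform {Q : ℝ[X]} (hQ : Q.natDegree < M) (t : ℝ) :
    (gaussTransform hb M Q).eval t = gaussianMoment hb t Q := by
  have hshift : gaussianMoment hb t Q = gaussianMoment hb 0 (taylor t Q) := by
    rw [gaussianMoment_apply, ← integral_add_right_eq_self (μ := volume) _ t]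
    simp only [gaussianMoment_apply, taylor_eval, add_sub_cancel_right, sub_zero]
  rw [hshift, (taylor t Q).as_sum_range_C_mul_X_pow' (by rwa [natDegree_taylor]), map_sum,
    gaussTransform_apply, eval_finsetSum]
  refine Finset.sum_congr rfl fun j _ ↦ ?_
  rw [← smul_eq_C_mul, map_smul, taylor_coeff, eval_smul, smul_eq_mul, smul_eq_mul, mul_comm]

lemma hasseDeriv_gaussTransform (i : ℕ) (Q : ℝ[X]) :
    hasseDeriv i (gaussTransform hb M Q) = gaussTransform hb M (hasseDeriv i Q) := by
  simp only [gaussTransform_apply, map_sum, map_smul, hasseDeriv_comm i]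

lemma natDegree_gaussTransform_le (Q : ℝ[X]) :
    (gaussTransform hb M Q).natDegree ≤ Q.natDegree := by
  rw [gaussTransform_apply]
  refine natDegree_sum_le_of_forall_le _ _ fun j _ ↦ ?_
  exact (natDegree_smul_le _ _).trans ((natDegree_hasseDeriv_le Q j).trans (Nat.sub_le _ _))

lemma coeff_gaussTransform_natDegree (hM : 0 < M) (Q : ℝ[X]) :
    (gaussTransform hb M Q).coeff Q.natDegree = gaussianMoment hb 0 1 * Q.leadingCoeff := by
  rw [gaussTransform_apply, finsetSum_coeff,
    Finset.sum_eq_single_of_mem 0 (Finset.mem_range.2 hM)]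
  · simp only [pow_zero, hasseDeriv_zero', coeff_smul, smul_eq_mul, leadingCoeff]
  · intro j _ hj
    rw [coeff_smul, hasseDeriv_coeff, coeff_eq_zero_of_natDegree_lt (by omega), mul_zero, smul_zero]

lemma leadingCoeff_gaussTransform (hM : 0 < M) (Q : ℝ[X]) :
    (gaussTransform hb M Q).leadingCoeff = gaussianMoment hb 0 1 * Q.leadingCoeff := by
  rcases eq_or_ne Q 0 with rfl | hQ
  · simp
  have hne : (gaussTransform hb M Q).coeff Q.natDegree ≠ 0 := by
    rw [coeff_gaussTransform_natDegree hb hM]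
    exact mul_ne_zero (gaussianMoment_zero_one_pos hb).ne' (leadingCoeff_ne_zero.2 hQ)
  rw [leadingCoeff, natDegree_eq_of_le_of_coeff_ne_zero (natDegree_gaussTransform_le hb Q) hne,
    coeff_gaussTransform_natDegree hb hM]

lemma gaussTransform_injective (hM : 0 < M) : Function.Injective (gaussTransform hb M) := by
  refine (injective_iff_map_eq_zero _).2 fun Q hQ ↦ ?_
  have h := leadingCoeff_gaussTransform hb hM Q
  rw [hQ, leadingCoeff_zero, eq_comm] at h
  exact leadingCoeff_eq_zero.1 ((mul_eq_zero.1 h).resolve_left (gaussianMoment_zero_one_pos hb).ne')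

lemma X_sub_C_pow_dvd_gaussTransform {t : ℝ} {Q : ℝ[X]} {k : ℕ} (hQ : Q.natDegree < M)
    (horth : ∀ j < k, gaussianMoment hb t (Q * X ^ j) = 0) :
    (X - C t) ^ k ∣ gaussTransform hb M Q := by
  refine X_sub_C_pow_dvd_iff_hasseDeriv_eval_eq_zero.2 fun j hj ↦ ?_
  rw [hasseDeriv_gaussTransform,
    eval_gaussTransform hb ((natDegree_hasseDeriv_le Q j).trans_lt (by omega))]
  exact gaussianMoment_hasseDeriv_eq_zero horth hj

lemma gaussTransform_eq_of_orthogonal {s t : ℝ} (hst : s ≠ t) {m₁ m₂ : ℕ} {P : ℝ[X]}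
    (hP : P.Monic) (hdeg : P.natDegree = m₁ + m₂) (hM : m₁ + m₂ < M)
    (h₁ : ∀ j < m₁, gaussianMoment hb s (P * X ^ j) = 0)
    (h₂ : ∀ j < m₂, gaussianMoment hb t (P * X ^ j) = 0) :
    gaussTransform hb M P = C (gaussianMoment hb 0 1) * ((X - C s) ^ m₁ * (X - C t) ^ m₂) := by
  have hG : ((X - C s) ^ m₁ * (X - C t) ^ m₂).Monic :=
    ((monic_X_sub_C s).pow m₁).mul ((monic_X_sub_C t).pow m₂)
  have hdvd : (X - C s) ^ m₁ * (X - C t) ^ m₂ ∣ gaussTransform hb M P :=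
    (isCoprime_X_sub_C_of_isUnit_sub (sub_ne_zero.2 hst).isUnit).pow.mul_dvd
      (X_sub_C_pow_dvd_gaussTransform hb (by omega) h₁)
      (X_sub_C_pow_dvd_gaussTransform hb (by omega) h₂)
  have hdegG :
      (gaussTransform hb M P).natDegree ≤ ((X - C s) ^ m₁ * (X - C t) ^ m₂).natDegree := by
    rw [((monic_X_sub_C s).pow m₁).natDegree_mul ((monic_X_sub_C t).pow m₂)]
    simpa [hdeg] using natDegree_gaussTransform_le hb P
  rw [eq_leadingCoeff_mul_of_monic_of_dvd_of_natDegree_le hG hdvd hdegG,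
    leadingCoeff_gaussTransform hb (by omega), hP.leadingCoeff, mul_one]

end GaussTransform

lemma integral_eval_mul_w1 {N : ℝ} (hN : 0 < N) (a : ℝ) (Q : ℝ[X]) :
    ∫ x, Q.eval x * w1 N a x = exp (N * a ^ 2 / 2) * gaussianMoment (half_pos hN) a Q := by
  rw [gaussianMoment_apply, ← integral_const_mul]
  congr 1 with x
  rw [w1, mul_left_comm, ← exp_add]
  ring_nf

lemma integral_eval_mul_w2 {N : ℝ} (hN : 0 < N) (a : ℝ) (Q : ℝ[X]) :
    ∫ x, Q.eval x * w2 N a x = exp (N * a ^ 2 / 2) * gaussianMoment (half_pos hN) (-a) Q := by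
  rw [gaussianMoment_apply, ← integral_const_mul]
  congr 1 with x
  rw [w2, mul_left_comm, ← exp_add]
  ring_nf

lemma gaussTransform_of_isMHP {N a : ℝ} (hN : 0 < N) (ha : a ≠ 0) {m₁ m₂ M : ℕ} {P : ℝ[X]}
    (hP : IsMHP N a m₁ m₂ P) (hM : m₁ + m₂ < M) :
    gaussTransform (half_pos hN) M P =
      C (gaussianMoment (half_pos hN) 0 1) * ((X - C a) ^ m₁ * (X - C (-a)) ^ m₂) := by
  obtain ⟨hmon, hdeg, h₁, h₂⟩ := hP
  refine gaussTransform_eq_of_orthogonal _ (by contrapose! ha; linarith) hmon hdeg hM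
    (fun j hj ↦ ?_) (fun j hj ↦ ?_)
  · have h := integral_eval_mul_w1 hN a (P * X ^ j)
    simp only [eval_mul, eval_pow, eval_X, h₁ j hj] at h
    exact (mul_eq_zero.1 h.symm).resolve_left (exp_ne_zero _)
  · have h := integral_eval_mul_w2 hN a (P * X ^ j)
    simp only [eval_mul, eval_pow, eval_X, h₂ j hj] at h
    exact (mul_eq_zero.1 h.symm).resolve_left (exp_ne_zero _)

/-- Nearest-neighbor relations for multiple Hermite polynomials. -/
theorem statement15 (N a : ℝ) (hN : 0 < N) (ha : a ≠ 0)
    (P : ℕ → ℕ → Polynomial ℝ) (hP : ∀ k₁ k₂ : ℕ, IsMHP N a k₁ k₂ (P k₁ k₂))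
    (k₁ k₂ : ℕ) (hk₁ : 1 ≤ k₁) (hk₂ : 1 ≤ k₂) :
    (∀ z : ℝ, (P (k₁ + 1) (k₂ - 1)).eval z =
      (P k₁ k₂).eval z - 2 * a * (P k₁ (k₂ - 1)).eval z) ∧
    (∀ z : ℝ, (P (k₁ - 1) (k₂ + 1)).eval z =
      (P k₁ k₂).eval z + 2 * a * (P (k₁ - 1) k₂).eval z) := by
  obtain ⟨n₁, rfl⟩ : ∃ n, k₁ = n + 1 := ⟨k₁ - 1, by omega⟩
  obtain ⟨n₂, rfl⟩ : ∃ n, k₂ = n + 1 := ⟨k₂ - 1, by omega⟩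
  simp only [Nat.add_sub_cancel]
  set T := gaussTransform (half_pos hN) (n₁ + n₂ + 3)
  have hT : ∀ m₁ m₂, m₁ + m₂ < n₁ + n₂ + 3 → T (P m₁ m₂) =
      C (gaussianMoment (half_pos hN) 0 1) * ((X - C a) ^ m₁ * (X - C (-a)) ^ m₂) :=
    fun m₁ m₂ hm ↦ gaussTransform_of_isMHP hN ha (hP m₁ m₂) hm
  have hinj : Function.Injective T := gaussTransform_injective _ (by omega)
  have hup : P (n₁ + 2) n₂ = P (n₁ + 1) (n₂ + 1) - C (2 * a) * P (n₁ + 1) n₂ := by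
    refine hinj ?_
    rw [map_sub, ← smul_eq_C_mul, map_smul,
      hT _ _ (by omega), hT _ _ (by omega), hT _ _ (by omega)]
    simp only [smul_eq_C_mul, C_mul, C_neg, C_ofNat]
    ring
  have hdown : P n₁ (n₂ + 2) = P (n₁ + 1) (n₂ + 1) + C (2 * a) * P n₁ (n₂ + 1) := by
    refine hinj ?_
    rw [map_add, ← smul_eq_C_mul, map_smul,
      hT _ _ (by omega), hT _ _ (by omega), hT _ _ (by omega)]
    simp only [smul_eq_C_mul, C_mul, C_neg, C_ofNat]
    ring
  exact ⟨fun z ↦ by simp [hup], fun z ↦ by simp [hdown]⟩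

end
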